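/- The algorithm DPTheilSen, which on input a multiset d of n points in ℝ², privacy parameter ε > 0, and hyperparameters R, θ > 0, computes the multiset S_d of all C(n,2) pairwise slopes (with the Slope convention) and outputs DPWide(S_d, ε/(n−1), (1/2, [−R,R], θ)), is ε-differentially private with respect to neighboring size-n multisets. -/

import Mathlib

open MeasureTheory

/-- Multiset distance: half the L1 distance between multiplicity functions. -/
noncomputable def msDist {α : Type*} (d d' : Multiset α) : ℕ :=
  letI := Classical.decEq α
  ((d - d').card + (d' - d).card) / 2

/-- `ε`-differential privacy for randomized algorithms on size-`n` multisets. -/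
def IsDP {W O : Type*} [MeasurableSpace O] (n : ℕ)
    (M : Multiset W → Measure O) (ε : ℝ) : Prop :=
  ∀ d d' : Multiset W, Multiset.card d = n → Multiset.card d' = n → msDist d d' = 1 →
    ∀ E : Set O, MeasurableSet E →
      M d E ≤ ENNReal.ofReal (Real.exp ε) * M d' E

/-- The Slope convention for an unordered pair of points. -/
noncomputable def uslope (w w' : ℝ × ℝ) : EReal :=
  if w = w' then 0
  else if w.1 = w'.1 then ⊤
  else (((w'.2 - w.2) / (w'.1 - w.1) : ℝ) : EReal)

lemma uslope_symm (w w' : ℝ × ℝ) : uslope w w' = uslope w' w := by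
  unfold uslope
  rcases eq_or_ne w w' with h | h
  · simp [h]
  · rw [if_neg h, if_neg (Ne.symm h)]
    rcases eq_or_ne w.1 w'.1 with h1 | h1
    · simp [h1]
    · rw [if_neg h1, if_neg (Ne.symm h1)]
      norm_cast
      rw [div_eq_div_iff (by exact sub_ne_zero.mpr (Ne.symm h1)) (by exact sub_ne_zero.mpr h1)]
      ring

/-- The slope of an unordered pair of points. -/
noncomputable def slopeSym2 : Sym2 (ℝ × ℝ) → EReal :=
  Sym2.lift ⟨uslope, uslope_symm⟩

/-- The multiset `S_d` of the `C(n,2)` pairwise slopes of a multiset `d` of points. -/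
noncomputable def slopesOf (d : Multiset (ℝ × ℝ)) : Multiset EReal :=
  letI := Classical.decEq (Sym2 (ℝ × ℝ))
  (d.sym2 - d.map (fun w => Sym2.mk w w)).map slopeSym2

/-- The widened utility function `u_s(y) = - min_{z ∈ [y-θ,y+θ]} |#{i : s_i ≤ z} - q·N|`. -/
noncomputable def uWide (q θ : ℝ) (s : Multiset EReal) (y : ℝ) : ℝ :=
  - sInf ((fun z : ℝ =>
      |((s.filter (fun t => t ≤ (z : EReal))).card : ℝ) - q * (Multiset.card s : ℝ)|) ''
    Set.Icc (y - θ) (y + θ))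

/-- The widened exponential mechanism `DPWide(s, ε, (q, [-R,R], θ))`. -/
noncomputable def dpWide (ε q R θ : ℝ) (s : Multiset EReal) : Measure ℝ :=
  let μ := (volume.restrict (Set.Icc (-R) R)).withDensity
    (fun y => ENNReal.ofReal (Real.exp (ε / 2 * uWide q θ s y)))
  (μ Set.univ)⁻¹ • μ

/-! Replacing one point `a` of `d` by `b` changes only the `n - 1` slopes through that point, so
every count `#{i : s_i ≤ z}`, and with it the widened utility, moves by at most `n - 1`. At scale
`ε / (n - 1)` the unnormalised density of the exponential mechanism and its normalising constant
therefore each change by a factor of at most `exp (ε / 2)`. -/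

open scoped ENNReal

theorem Multiset.exists_cons_eq_cons_of_msDist_eq_one {α : Type*} {d d' : Multiset α}
    (hcard : Multiset.card d = Multiset.card d') (hdist : msDist d d' = 1) :
    ∃ a b w, d = a ::ₘ w ∧ d' = b ::ₘ w := by
  let _ := Classical.decEq α
  have hdist' : ((d - d').card + (d' - d).card) / 2 = 1 := hdist
  have hsum : (d - d').card + (d ∩ d').card = (d' - d).card + (d ∩ d').card := by
    rw [← Multiset.card_add, Multiset.sub_add_inter, ← Multiset.card_add, Multiset.inter_comm,
      Multiset.sub_add_inter, hcard]
  obtain ⟨a, ha⟩ := Multiset.card_eq_one.mp (show (d - d').card = 1 by omega)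
  obtain ⟨b, hb⟩ := Multiset.card_eq_one.mp (show (d' - d).card = 1 by omega)
  refine ⟨a, b, d ∩ d', ?_, ?_⟩
  · rw [← Multiset.singleton_add, ← ha, Multiset.sub_add_inter]
  · rw [← Multiset.singleton_add, ← hb, Multiset.inter_comm, Multiset.sub_add_inter]

theorem slopesOf_cons (a : ℝ × ℝ) (w : Multiset (ℝ × ℝ)) :
    slopesOf (a ::ₘ w) = w.map (uslope a) + slopesOf w := by
  let _ := Classical.decEq (Sym2 (ℝ × ℝ))
  have hdiag : w.map (fun x => s(x, x)) ≤ w.sym2 := by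
    induction w using Multiset.induction with
    | empty => simp
    | cons b w ih =>
      rw [Multiset.map_cons, Multiset.sym2_cons, Multiset.map_cons, Multiset.cons_add]
      exact Multiset.cons_le_cons _ (ih.trans (Multiset.le_add_left _ _))
  unfold slopesOf
  rw [Multiset.sym2_cons, Multiset.map_cons, Multiset.map_cons, Multiset.cons_add,
    ← Multiset.singleton_add, ← Multiset.singleton_add, add_tsub_add_eq_tsub_left,
    add_tsub_assoc_of_le hdiag, Multiset.map_add, Multiset.map_map]
  rfl

theorem csInf_image_le_csInf_image_add {ι : Type*} {f g : ι → ℝ} {I : Set ι} {k : ℝ}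
    (hk : 0 ≤ k) (hf : BddBelow (f '' I)) (hfg : ∀ z ∈ I, f z ≤ g z + k) :
    sInf (f '' I) ≤ sInf (g '' I) + k := by
  rcases I.eq_empty_or_nonempty with rfl | hI
  · simpa using hk
  rw [← sub_le_iff_le_add]
  refine le_csInf (hI.image g) ?_
  rintro _ ⟨z, hz, rfl⟩
  linarith [csInf_le hf (Set.mem_image_of_mem f hz), hfg z hz]

theorem Multiset.abs_card_filter_add_sub_card_filter_add_le {β : Type*} {A B : Multiset β}
    (C : Multiset β) (hAB : Multiset.card A = Multiset.card B) (p : β → Prop) [DecidablePred p] :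
    |(((A + C).filter p).card : ℝ) - ((B + C).filter p).card| ≤ Multiset.card A := by
  have hA : ((A.filter p).card : ℝ) ≤ Multiset.card A := by
    exact_mod_cast Multiset.card_le_card (Multiset.filter_le p A)
  have hB : ((B.filter p).card : ℝ) ≤ Multiset.card A := by
    exact_mod_cast hAB ▸ Multiset.card_le_card (Multiset.filter_le p B)
  simp only [Multiset.filter_add, Multiset.card_add, Nat.cast_add, add_sub_add_right_eq_sub]
  rw [abs_le]
  constructor <;> linarith [(Nat.cast_nonneg _ : (0 : ℝ) ≤ (A.filter p).card),
    (Nat.cast_nonneg _ : (0 : ℝ) ≤ (B.filter p).card)]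

theorem abs_uWide_add_sub_uWide_add_le (q θ y : ℝ) {A B : Multiset EReal} (C : Multiset EReal)
    (hAB : Multiset.card A = Multiset.card B) :
    |uWide q θ (A + C) y - uWide q θ (B + C) y| ≤ Multiset.card A := by
  set F := fun (s : Multiset EReal) (z : ℝ) =>
    |((s.filter (fun t => t ≤ (z : EReal))).card : ℝ) - q * (Multiset.card s : ℝ)|
  have hcard : Multiset.card (A + C) = Multiset.card (B + C) := by simp [hAB]
  have hpt : ∀ z, |F (A + C) z - F (B + C) z| ≤ Multiset.card A := fun z =>
    (abs_abs_sub_abs_le_abs_sub _ _).trans <| by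
      simpa [hcard] using Multiset.abs_card_filter_add_sub_card_filter_add_le C hAB _
  have hbdd : ∀ s, BddBelow (F s '' Set.Icc (y - θ) (y + θ)) := fun s =>
    ⟨0, by rintro _ ⟨z, -, rfl⟩; exact abs_nonneg _⟩
  have hk : (0 : ℝ) ≤ Multiset.card A := Nat.cast_nonneg _
  have h₁ := csInf_image_le_csInf_image_add (g := F (B + C)) hk (hbdd (A + C)) fun z _ => by
    linarith [(abs_le.mp (hpt z)).2]
  have h₂ := csInf_image_le_csInf_image_add (g := F (A + C)) hk (hbdd (B + C)) fun z _ => by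
    linarith [(abs_le.mp (hpt z)).1]
  change |-sInf (F (A + C) '' _) - -sInf (F (B + C) '' _)| ≤ _
  rw [abs_le]
  constructor <;> linarith

section ExponentialMechanism

variable {α : Type*} [MeasurableSpace α] {ν : Measure α} {f g : α → ℝ≥0∞} {c : ℝ≥0∞}

theorem withDensity_le_smul_withDensity (hc : c ≠ ∞) (hfg : ∀ x, f x ≤ c * g x) :
    ν.withDensity f ≤ c • ν.withDensity g := by
  rw [← withDensity_smul' c g hc]
  exact withDensity_mono (Filter.Eventually.of_forall hfg)

theorem inv_smul_withDensity_le_smul (hc₀ : c ≠ 0) (hc : c ≠ ∞)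
    (hfg : ∀ x, f x ≤ c * g x) (hgf : ∀ x, g x ≤ c * f x) :
    (ν.withDensity f Set.univ)⁻¹ • ν.withDensity f ≤
      c ^ 2 • ((ν.withDensity g Set.univ)⁻¹ • ν.withDensity g) := by
  have hnorm : (ν.withDensity f Set.univ)⁻¹ ≤ c * (ν.withDensity g Set.univ)⁻¹ :=
    calc (ν.withDensity f Set.univ)⁻¹ = c * (c * ν.withDensity f Set.univ)⁻¹ := by
          rw [ENNReal.mul_inv (.inl hc₀) (.inl hc), ← mul_assoc, ENNReal.mul_inv_cancel hc₀ hc,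
            one_mul]
      _ ≤ c * (ν.withDensity g Set.univ)⁻¹ := by
          gcongr
          exact withDensity_le_smul_withDensity hc hgf Set.univ
  refine Measure.le_iff'.2 fun E => ?_
  simp only [Measure.smul_apply, smul_eq_mul]
  calc (ν.withDensity f Set.univ)⁻¹ * ν.withDensity f E
      ≤ (c * (ν.withDensity g Set.univ)⁻¹) * (c * ν.withDensity g E) :=
        mul_le_mul' hnorm (withDensity_le_smul_withDensity hc hfg E)
    _ = c ^ 2 * ((ν.withDensity g Set.univ)⁻¹ * ν.withDensity g E) := by ring

end ExponentialMechanism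

theorem dpWide_le_smul_dpWide {ε q R θ Δ : ℝ} (hε : 0 ≤ ε) {s s' : Multiset EReal}
    (hu : ∀ y, |uWide q θ s y - uWide q θ s' y| ≤ Δ) :
    dpWide ε q R θ s ≤ ENNReal.ofReal (Real.exp (ε * Δ)) • dpWide ε q R θ s' := by
  set c := ENNReal.ofReal (Real.exp (ε / 2 * Δ))
  have hdensity : ∀ {t t' : Multiset EReal}, (∀ y, uWide q θ t y ≤ uWide q θ t' y + Δ) →
      ∀ y, ENNReal.ofReal (Real.exp (ε / 2 * uWide q θ t y)) ≤
        c * ENNReal.ofReal (Real.exp (ε / 2 * uWide q θ t' y)) := fun htt' y => by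
    rw [← ENNReal.ofReal_mul (Real.exp_pos _).le, ← Real.exp_add, ← mul_add]
    gcongr
    linarith [htt' y]
  have hc : c ^ 2 = ENNReal.ofReal (Real.exp (ε * Δ)) := by
    rw [← ENNReal.ofReal_pow (Real.exp_pos _).le, ← Real.exp_nat_mul]
    ring_nf
  rw [← hc]
  exact inv_smul_withDensity_le_smul (by simp [c, Real.exp_pos]) ENNReal.ofReal_ne_top
    (hdensity fun y => by linarith [(abs_le.mp (hu y)).2])
    (hdensity fun y => by linarith [(abs_le.mp (hu y)).1])

theorem dpTheilSen_is_DP_general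
    (n : ℕ) (ε R θ : ℝ) (hε : 0 < ε) :
    IsDP n (fun d : Multiset (ℝ × ℝ) =>
      dpWide (ε / ((n : ℝ) - 1)) (1 / 2) R θ (slopesOf d)) ε := by
  intro d d' hd hd' hdist E _
  obtain ⟨a, b, w, rfl, rfl⟩ :=
    Multiset.exists_cons_eq_cons_of_msDist_eq_one (hd.trans hd'.symm) hdist
  have hw : (n : ℝ) - 1 = Multiset.card w := by simp [← hd]
  have hsens : ∀ y, |uWide (1 / 2) θ (slopesOf (a ::ₘ w)) y
      - uWide (1 / 2) θ (slopesOf (b ::ₘ w)) y| ≤ (n : ℝ) - 1 := fun y => by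
    simpa [slopesOf_cons, hw] using
      abs_uWide_add_sub_uWide_add_le (1 / 2) θ y (slopesOf w)
        (by simp : (w.map (uslope a)).card = (w.map (uslope b)).card)
  have hε' : ε / ((n : ℝ) - 1) * ((n : ℝ) - 1) ≤ ε := by
    -- for `n = 1` the privacy scale is the junk value `ε / 0 = 0`
    rcases eq_or_ne ((n : ℝ) - 1) 0 with h | h
    · simpa [h] using hε.le
    · rw [div_mul_cancel₀ ε h]
  calc _ ≤ ENNReal.ofReal (Real.exp (ε / ((n : ℝ) - 1) * ((n : ℝ) - 1))) * _ :=
        dpWide_le_smul_dpWide (div_nonneg hε.le (hw ▸ Nat.cast_nonneg _)) hsens E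
    _ ≤ ENNReal.ofReal (Real.exp ε) * _ := by gcongr ENNReal.ofReal (Real.exp ?_) * _

/-- **Privacy of `DPTheilSen`** (Lemma 5 of the paper): the algorithm that computes the
multiset `S_d` of all `C(n,2)` pairwise slopes of the input dataset `d` and outputs
`DPWide(S_d, ε/(n-1), (1/2, [-R,R], θ))` is `ε`-differentially private. -/
theorem dpTheilSen_is_DP
    (n : ℕ) (hn : 2 ≤ n) (ε R θ : ℝ) (hε : 0 < ε) (hR : 0 < R) (hθ : 0 < θ ∧ θ < R) :
    IsDP n (fun d : Multiset (ℝ × ℝ) =>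
      dpWide (ε / ((n : ℝ) - 1)) (1 / 2) R θ (slopesOf d)) ε :=
  dpTheilSen_is_DP_general n ε R θ hε
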